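/- In the stable sorted merge of two sorted lists of strings, the number of block boundaries whose LCP value is 0 is at most σ, the number of distinct first characters occurring among the strings; hence the number of blocks is at most L + σ + 1, where L is the sum of the LCP values at block boundaries. -/

import Mathlib

/-- Length of the longest common prefix of two strings. -/
def lcp {α : Type*} [DecidableEq α] : List α → List α → ℕ
  | a :: s, b :: t => if a = b then lcp s t + 1 else 0
  | _, _ => 0

/-- The stable merge of two lists, tagging each element with the list (1 or 2) it
came from; ties are broken in favor of the first list. -/
def mergeTagged {α : Type*} [LinearOrder α] : List α → List α → List (α × ℕ)
  | [], B => B.map (·, 2)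
  | a :: A, [] => (a, 1) :: mergeTagged A []
  | a :: A, b :: B =>
    if a ≤ b then (a, 1) :: mergeTagged A (b :: B)
    else (b, 2) :: mergeTagged (a :: A) B
  termination_by A B => A.length + B.length

/-- The number of maximal blocks (maximal runs of equal consecutive elements) of a list. -/
def runsCount {β : Type*} [DecidableEq β] : List β → ℕ
  | [] => 0
  | [_] => 1
  | a :: b :: l => (if a = b then 0 else 1) + runsCount (b :: l)

namespace ZLBaux

variable {α : Type*} [LinearOrder α]

lemma head_le_of_le {a b : α} {s t : List α} (h : (a :: s) ≤ (b :: t)) : a ≤ b := by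
  rcases lt_or_eq_of_le h with h | h
  · exact List.head_le_of_lt h
  · cases h; exact le_rfl

lemma lcp_eq_zero_iff {a b : α} (s t : List α) : lcp (a :: s) (b :: t) = 0 ↔ a ≠ b := by
  rw [lcp]
  split_ifs with h <;> simp [h]

lemma mem_mergeTagged_fst : ∀ (A B : List α) (x : α),
    x ∈ (mergeTagged A B).map Prod.fst → x ∈ A ++ B
  | [], B, x => by simp [mergeTagged, List.map_map]
  | a :: A, [], x => by
    intro h
    rw [mergeTagged] at h
    simp only [List.map_cons, List.mem_cons] at h
    rcases h with h | h
    · simp [h]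
    · have := mem_mergeTagged_fst A [] x h
      simp at this ⊢
      tauto
  | a :: A, b :: B, x => by
    intro h
    rw [mergeTagged] at h
    split_ifs at h <;> simp only [List.map_cons, List.mem_cons] at h <;>
      rcases h with h | h
    · simp [h]
    · have := mem_mergeTagged_fst A (b :: B) x h
      simp at this ⊢
      tauto
    · simp [h]
    · have := mem_mergeTagged_fst (a :: A) B x h
      simp at this ⊢
      tauto
  termination_by A B => A.length + B.length

lemma mergeTagged_sorted : ∀ (A B : List α), A.Pairwise (· ≤ ·) → B.Pairwise (· ≤ ·) →
    ((mergeTagged A B).map Prod.fst).Pairwise (· ≤ ·)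
  | [], B, _, hB => by
    rw [mergeTagged, List.map_map]
    show (B.map id).Pairwise (· ≤ ·)
    rw [List.map_id]
    exact hB
  | a :: A, [], hA, hB => by
    rw [mergeTagged]
    rw [List.pairwise_cons] at hA
    simp only [List.map_cons, List.pairwise_cons]
    refine ⟨?_, mergeTagged_sorted A [] hA.2 hB⟩
    intro x hx
    have := mem_mergeTagged_fst A [] x hx
    simp at this
    exact hA.1 x this
  | a :: A, b :: B, hA, hB => by
    rw [mergeTagged]
    rw [List.pairwise_cons] at hA hB
    split_ifs with hab
    · simp only [List.map_cons, List.pairwise_cons]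
      refine ⟨?_, mergeTagged_sorted A (b :: B) hA.2 (List.pairwise_cons.2 hB)⟩
      intro x hx
      have := mem_mergeTagged_fst A (b :: B) x hx
      simp only [List.mem_append, List.mem_cons] at this
      rcases this with h | h | h
      · exact hA.1 x h
      · exact h ▸ hab
      · exact hab.trans (hB.1 x h)
    · simp only [List.map_cons, List.pairwise_cons]
      have hba : b ≤ a := (lt_of_not_ge hab).le
      refine ⟨?_, mergeTagged_sorted (a :: A) B (List.pairwise_cons.2 hA) hB.2⟩
      intro x hx
      have := mem_mergeTagged_fst (a :: A) B x hx
      simp only [List.mem_append, List.mem_cons] at this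
      rcases this with (h | h) | h
      · exact h ▸ hba
      · exact hba.trans (hA.1 x h)
      · exact hB.1 x h
  termination_by A B => A.length + B.length

/-- Core counting lemma: in a sorted list of nonempty strings, the number of adjacent
pairs with lcp zero is at most the number of distinct heads. -/
lemma countP_lcp_zero_le : ∀ (M : List (List α)), M.Pairwise (· ≤ ·) →
    (∀ s ∈ M, s ≠ []) →
    (M.zip M.tail).countP (fun p => lcp p.1 p.2 = 0) ≤
      (M.filterMap List.head?).toFinset.card
  | [], _, _ => by simp
  | [x], _, _ => by simp
  | x :: y :: M', hs, hne => by
    obtain ⟨a, s, rfl⟩ := List.exists_cons_of_ne_nil (hne x (by simp))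
    obtain ⟨b, t, hy⟩ := List.exists_cons_of_ne_nil (hne y (by simp))
    rw [List.pairwise_cons] at hs
    have hs2 := List.pairwise_cons.1 hs.2
    have ih := countP_lcp_zero_le (y :: M') hs.2 (fun s hs' => hne s (by simp [hs']))
    have hzip : ((a :: s) :: y :: M').zip (((a :: s) :: y :: M').tail)
        = ((a :: s), y) :: ((y :: M').zip M') := by simp
    have hfm : ((a :: s) :: y :: M').filterMap List.head?
        = a :: ((y :: M').filterMap List.head?) := by simp
    rw [hzip, List.countP_cons, hfm]
    have htail : (y :: M').zip ((y :: M').tail) = (y :: M').zip M' := by simp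
    rw [htail] at ih
    by_cases hl : lcp (a :: s) y = 0
    · -- heads differ, and a < every head in the rest
      subst hy
      have hab : a ≠ b := (lcp_eq_zero_iff s t).1 hl
      have hle : a ≤ b := head_le_of_le (hs.1 (b :: t) (by simp))
      have halt : a < b := lt_of_le_of_ne hle hab
      have hnotmem : a ∉ ((b :: t) :: M').filterMap List.head? := by
        intro hmem
        rw [List.mem_filterMap] at hmem
        obtain ⟨z, hz, hzh⟩ := hmem
        obtain ⟨c, u, rfl⟩ := List.exists_cons_of_ne_nil
          (hne z (List.mem_cons_of_mem _ hz))
        simp only [List.head?_cons, Option.some.injEq] at hzh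
        rcases List.mem_cons.1 hz with h | h
        · simp only [List.cons.injEq] at h
          exact hab (hzh.symm.trans h.1)
        · have hle2 : (b :: t) ≤ (c :: u) := hs2.1 _ h
          exact absurd ((head_le_of_le hle2).trans_eq hzh) (not_le.2 halt)
      rw [List.toFinset_cons, Finset.card_insert_of_notMem (by simpa using hnotmem)]
      rw [decide_eq_true hl, if_pos rfl]
      omega
    · rw [List.toFinset_cons]
      have : ((y :: M').filterMap List.head?).toFinset.card ≤
          (insert a ((y :: M').filterMap List.head?).toFinset).card :=
        Finset.card_le_card (Finset.subset_insert _ _)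
      rw [decide_eq_false hl, if_neg (by simp)]
      omega

lemma runsCount_eq {β : Type*} [DecidableEq β] : ∀ (l : List β),
    runsCount l = (l.zip l.tail).countP (fun p => p.1 ≠ p.2)
      + (if l = [] then 0 else 1)
  | [] => by simp [runsCount]
  | [a] => by simp [runsCount]
  | a :: b :: l => by
    rw [runsCount, runsCount_eq (b :: l)]
    have hzip : ((a :: b :: l).zip ((a :: b :: l).tail))
        = (a, b) :: ((b :: l).zip ((b :: l).tail)) := by simp
    rw [hzip, List.countP_cons]
    by_cases h : a = b <;> simp [h] <;> omega

lemma countP_ne_zero_le_sum {γ : Type*} (f : γ → ℕ) : ∀ (l : List γ),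
    l.countP (fun x => f x ≠ 0) ≤ (l.map f).sum
  | [] => by simp
  | a :: l => by
    rw [List.countP_cons, List.map_cons, List.sum_cons]
    have := countP_ne_zero_le_sum f l
    by_cases h : f a = 0
    · rw [if_neg (by simp [h])]
      omega
    · rw [if_pos (by simp [h])]
      have h1 : 1 ≤ f a := Nat.one_le_iff_ne_zero.2 h
      omega

end ZLBaux

/-- In the stable sorted merge of two sorted lists of nonempty strings, the number of
block boundaries (adjacent positions with different source labels) whose LCP value is
`0` is at most `σ`, the number of distinct first characters among the strings; hence
the number of blocks is at most `L + σ + 1`, where `L` is the sum of the LCP values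
at the block boundaries. -/
theorem zero_lcp_boundaries_le_sigma {α : Type*} [LinearOrder α]
    (A B : List (List α))
    (hA : A.Pairwise (· ≤ ·)) (hB : B.Pairwise (· ≤ ·))
    (hne : ∀ s ∈ A ++ B, s ≠ []) :
    let T := mergeTagged A B
    let boundaries := (T.zip T.tail).filter (fun p => p.1.2 ≠ p.2.2)
    let L := (boundaries.map (fun p => lcp p.1.1 p.2.1)).sum
    let σ := (((A ++ B).filterMap List.head?).toFinset).card
    boundaries.countP (fun p => lcp p.1.1 p.2.1 = 0) ≤ σ ∧
    runsCount (T.map Prod.snd) ≤ L + σ + 1 := by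
  intro T boundaries L σ
  classical
  set M : List (List α) := T.map Prod.fst with hM
  have hmem : ∀ x ∈ M, x ∈ A ++ B := fun x hx => ZLBaux.mem_mergeTagged_fst A B x hx
  have hMsorted : M.Pairwise (· ≤ ·) := ZLBaux.mergeTagged_sorted A B hA hB
  have hMne : ∀ s ∈ M, s ≠ [] := fun s hs => hne s (hmem s hs)
  -- pairs of M are the mapped pairs of T
  have hMzip : M.zip M.tail = (T.zip T.tail).map (Prod.map Prod.fst Prod.fst) := by
    rw [hM, ← List.map_tail, List.zip_map]
  -- key bound on zero-lcp adjacent pairs of M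
  have hcore : (M.zip M.tail).countP (fun p => lcp p.1 p.2 = 0) ≤ σ := by
    refine le_trans (ZLBaux.countP_lcp_zero_le M hMsorted hMne) ?_
    apply Finset.card_le_card
    intro u hu
    simp only [List.mem_toFinset, List.mem_filterMap] at hu ⊢
    obtain ⟨z, hz, hzh⟩ := hu
    exact ⟨z, hmem z hz, hzh⟩
  have hTcount : (T.zip T.tail).countP (fun p => lcp p.1.1 p.2.1 = 0)
      = (M.zip M.tail).countP (fun p => lcp p.1 p.2 = 0) := by
    rw [hMzip, List.countP_map]
    rfl
  have h1 : boundaries.countP (fun p => lcp p.1.1 p.2.1 = 0) ≤ σ := by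
    have := List.countP_filter (p := fun p : (List α × ℕ) × (List α × ℕ) => decide (lcp p.1.1 p.2.1 = 0))
      (q := fun p => decide (p.1.2 ≠ p.2.2)) (l := T.zip T.tail)
    rw [show boundaries = (T.zip T.tail).filter (fun p => p.1.2 ≠ p.2.2) from rfl, this]
    refine le_trans (le_trans (List.countP_mono_left ?_) (le_of_eq hTcount)) hcore
    intro x _ hx
    simp only [Bool.and_eq_true, decide_eq_true_eq] at hx ⊢
    exact hx.1
  refine ⟨h1, ?_⟩
  -- second part
  have hrc : runsCount (T.map Prod.snd)
      = (T.zip T.tail).countP (fun p => p.1.2 ≠ p.2.2)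
        + (if T.map Prod.snd = [] then 0 else 1) := by
    rw [ZLBaux.runsCount_eq (T.map Prod.snd)]
    congr 1
    rw [← List.map_tail, List.zip_map, List.countP_map]
    rfl
  have hlen : (T.zip T.tail).countP (fun p => p.1.2 ≠ p.2.2) = boundaries.length := by
    rw [show boundaries = (T.zip T.tail).filter (fun p => p.1.2 ≠ p.2.2) from rfl,
      List.countP_eq_length_filter]
  have hsplit : boundaries.length = boundaries.countP (fun p => lcp p.1.1 p.2.1 = 0)
      + boundaries.countP (fun p => ¬ (lcp p.1.1 p.2.1 = 0)) := by
    simpa using List.length_eq_countP_add_countP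
      (fun p : (List α × ℕ) × (List α × ℕ) => decide (lcp p.1.1 p.2.1 = 0)) (l := boundaries)
  have hL : boundaries.countP (fun p => ¬ (lcp p.1.1 p.2.1 = 0)) ≤ L := by
    have := ZLBaux.countP_ne_zero_le_sum (fun p : (List α × ℕ) × (List α × ℕ) =>
      lcp p.1.1 p.2.1) boundaries
    exact this
  have hif : (if T.map Prod.snd = [] then 0 else 1) ≤ 1 := by split <;> omega
  omega
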